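/- Let b > 0 and d, n positive integers with bd < 1. Let θ ∈ ℝⁿ and M an n×n symmetric matrix with M_{i,i} = 0 for all i, |M_{i,j}| ≤ b for all i, j, and each row of M having at most d nonzero entries. Let S ⊆ [n], v ∈ [n], x ∈ {−1,1}ⁿ, and let X ∼ I_{(M,θ)}. Then Σ_{u ∈ S, u ≠ v} |P[X_u = 1 | X_{S∖{v,u}} = x_{S∖{v,u}}, X_v = 1] − P[X_u = 1 | X_{S∖{v,u}} = x_{S∖{v,u}}, X_v = −1]| ≤ bd/(1 − bd). -/

import Mathlib

open Finset Real
open scoped Classical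

noncomputable section

/-- The real spin value (`±1`) of a Boolean configuration entry. -/
def spin (s : Bool) : ℝ := if s then 1 else -1

/-- The unnormalized Ising weight `exp(θ·x + ½ x·Mx)` of a configuration. -/
def isingWt {n : ℕ} (M : Matrix (Fin n) (Fin n) ℝ) (θ : Fin n → ℝ) (σ : Fin n → Bool) : ℝ :=
  Real.exp ((∑ i, θ i * spin (σ i)) + (1 / 2) * ∑ i, ∑ j, spin (σ i) * M i j * spin (σ j))

/-- The Ising probability of a single configuration. -/
def isingProb {n : ℕ} (M : Matrix (Fin n) (Fin n) ℝ) (θ : Fin n → ℝ) (σ : Fin n → Bool) : ℝ :=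
  isingWt M θ σ / ∑ τ : Fin n → Bool, isingWt M θ τ

/-- The Ising probability of an event `A`. -/
def isingPr {n : ℕ} (M : Matrix (Fin n) (Fin n) ℝ) (θ : Fin n → ℝ)
    (A : (Fin n → Bool) → Prop) : ℝ :=
  ∑ σ ∈ Finset.univ.filter (fun σ => A σ), isingProb M θ σ

/-- The Ising conditional probability `P[A | B]`. -/
def isingCond {n : ℕ} (M : Matrix (Fin n) (Fin n) ℝ) (θ : Fin n → ℝ)
    (A B : (Fin n → Bool) → Prop) : ℝ :=
  isingPr M θ (fun σ => A σ ∧ B σ) / isingPr M θ B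

/-!
The conditional law of `X` given `X_T` is invariant under the heat-bath update at any site
outside `T`, hence under the random-scan Glauber step `P` on the `m` free sites `Tᶜ`. So the
influence of `x_v` on `P[X_u = 1 | X_T]` can be read off `P^t 1{σ_u = 1}` for any `t`: it is at
most the sum of the oscillations of that function in the coordinates of `Tᶜ ∪ {v}`.
Flipping `σ_j` moves the heat-bath probability at `w` by at most `|M_wj|` (the log-odds move by
`4 M_wj` and the sigmoid is `1/4`-Lipschitz), so one step of `P` maps an oscillation vector `D`
to at most `(1 - 1/m) D + (1/m) |M|ᵀ D` on the free sites, while `(1/m) |M|ᵀ D` leaks into the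
conditioned ones. The column sums of `|M|` are at most `bd`; summed over `u`, the free part
therefore decays like `(1 - (1 - bd)/m)^t` and the total leakage into `v` is at most
`bd/(1 - bd)`. Let `t → ∞`.
-/

lemma Real.abs_sigmoid_sub_le (x y : ℝ) : |sigmoid x - sigmoid y| ≤ |x - y| / 4 := by
  have hderiv_le (z : ℝ) : ‖sigmoid z * (1 - sigmoid z)‖ ≤ 4⁻¹ := by
    have h₁ := sigmoid_le_one z
    rw [Real.norm_eq_abs, abs_of_nonneg (mul_nonneg (sigmoid_nonneg z) (by linarith))]
    nlinarith [sq_nonneg (2 * sigmoid z - 1)]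
  have := convex_univ.norm_image_sub_le_of_norm_hasDerivWithin_le
    (fun z _ => (hasDerivAt_sigmoid z).hasDerivWithinAt) (fun z _ => hderiv_le z)
    (Set.mem_univ y) (Set.mem_univ x)
  rw [Real.norm_eq_abs, Real.norm_eq_abs] at this
  linarith

lemma zero_le_one_sub_div {ε m : ℝ} (hm : 1 ≤ m) (hε : 0 ≤ ε) : 0 ≤ 1 - (1 - ε) / m := by
  rw [sub_nonneg, div_le_one (by linarith)]
  linarith

lemma le_of_forall_le_add_mul_pow {a c K κ : ℝ} (hκ₀ : 0 ≤ κ) (hκ₁ : κ < 1)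
    (h : ∀ t : ℕ, a ≤ c + K * κ ^ t) : a ≤ c :=
  ge_of_tendsto'
    (by simpa using ((tendsto_pow_atTop_nhds_zero_of_lt_one hκ₀ hκ₁).const_mul K).const_add c) h

lemma Matrix.sum_abs_le_of_sparse {ι : Type*} [Fintype ι] {M : Matrix ι ι ℝ} {b : ℝ} {d : ℕ}
    (hbound : ∀ i j, |M i j| ≤ b)
    (hsparse : ∀ i, (Finset.univ.filter (fun j => M i j ≠ 0)).card ≤ d) (i : ι) :
    ∑ j, |M i j| ≤ b * d := by
  have hb : 0 ≤ b := (abs_nonneg _).trans (hbound i i)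
  calc ∑ j, |M i j| = ∑ j ∈ Finset.univ.filter (fun j => M i j ≠ 0), |M i j| :=
        (Finset.sum_filter_of_ne fun j _ h => abs_ne_zero.1 h).symm
    _ ≤ (Finset.univ.filter (fun j => M i j ≠ 0)).card • b :=
        Finset.sum_le_card_nsmul _ _ _ fun j _ => hbound i j
    _ ≤ b * d := by rw [nsmul_eq_mul, mul_comm]; gcongr; exact_mod_cast hsparse i

lemma Matrix.sum_abs_mul_le {ι : Type*} [Fintype ι] {M : Matrix ι ι ℝ} {ε c : ℝ}
    (hcol : ∀ j, ∑ w, |M w j| ≤ ε) {e : ι → ℝ} (he : ∀ w, e w ≤ c)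
    (hc : 0 ≤ c) (j : ι) : ∑ w, |M w j| * e w ≤ ε * c :=
  calc _ ≤ ∑ w, |M w j| * c := Finset.sum_le_sum fun w _ => by gcongr; exact he w
    _ ≤ ε * c := by rw [← Finset.sum_mul]; exact mul_le_mul_of_nonneg_right (hcol j) hc

lemma Matrix.IsSymm.quadForm_update_sub {ι : Type*} [Fintype ι] [DecidableEq ι]
    {M : Matrix ι ι ℝ} (hsymm : M.IsSymm) (hdiag : ∀ i, M i i = 0) (s : ι → ℝ) (w : ι) (c c' : ℝ) :
    ∑ i, ∑ j, Function.update s w c i * M i j * Function.update s w c j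
      - ∑ i, ∑ j, Function.update s w c' i * M i j * Function.update s w c' j =
      2 * (c - c') * ∑ j, M w j * s j := by
  set a := Function.update s w c
  set b := Function.update s w c'
  have hcross : ∑ i, ∑ j, b i * M i j * a j = ∑ i, ∑ j, a i * M i j * b j := by
    rw [Finset.sum_comm]
    refine Finset.sum_congr rfl fun i _ => Finset.sum_congr rfl fun j _ => ?_
    rw [hsymm.apply i j]; ring
  have hpolar : ∑ i, ∑ j, (a i - b i) * M i j * (a j + b j) =
      ∑ i, ∑ j, a i * M i j * a j - ∑ i, ∑ j, b i * M i j * b j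
        + (∑ i, ∑ j, a i * M i j * b j - ∑ i, ∑ j, b i * M i j * a j) := by
    simp only [← Finset.sum_sub_distrib, ← Finset.sum_add_distrib]
    refine Finset.sum_congr rfl fun i _ => Finset.sum_congr rfl fun j _ => ?_
    ring
  have hsum (j : ι) : M w j * (a j + b j) = 2 * (M w j * s j) := by
    by_cases hj : j = w
    · simp [hj, hdiag]
    · simp [a, b, hj]; ring
  rw [hcross, sub_self, add_zero] at hpolar
  rw [← hpolar, Finset.sum_eq_single w (fun i _ hi => by simp [a, b, hi]) (by simp)]
  simp only [a, b, Function.update_self, mul_assoc, ← Finset.mul_sum, hsum]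
  ring

lemma Finset.abs_centerMass_sub_le {α : Type*} {A B : Finset α} {W f : α → ℝ} {K : ℝ}
    (hW : ∀ σ, 0 ≤ W σ) (hA : 0 < ∑ σ ∈ A, W σ) (hB : 0 < ∑ σ ∈ B, W σ)
    (hK : ∀ σ ∈ A, ∀ τ ∈ B, |f σ - f τ| ≤ K) :
    |A.centerMass W f - B.centerMass W f| ≤ K := by
  have hball : ∀ σ ∈ A, f σ ∈ Metric.closedBall (B.centerMass W f) K := fun σ hσ => by
    rw [Metric.mem_closedBall', Real.dist_eq]
    refine (convex_closedBall (f σ) K).centerMass_mem (fun τ _ => hW τ) hB fun τ hτ => ?_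
    rw [Metric.mem_closedBall', Real.dist_eq]
    exact hK σ hσ τ hτ
  simpa [Real.dist_eq] using
    (convex_closedBall (B.centerMass W f) K).centerMass_mem (fun σ _ => hW σ) hA hball

namespace Ising

section Configurations

variable {ι : Type*} [DecidableEq ι]

def OscBound (f : (ι → Bool) → ℝ) (D : ι → ℝ) : Prop :=
  ∀ j σ, |f (Function.update σ j true) - f (Function.update σ j false)| ≤ D j

variable {f : (ι → Bool) → ℝ} {D : ι → ℝ}

lemma OscBound.nonneg (h : OscBound f D) (j : ι) : 0 ≤ D j :=
  (abs_nonneg _).trans (h j fun _ => true)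

lemma OscBound.mono {D' : ι → ℝ} (h : OscBound f D) (hle : D ≤ D') : OscBound f D' :=
  fun j σ => (h j σ).trans (hle j)

lemma OscBound.abs_update_sub_le (h : OscBound f D) (j : ι) (σ : ι → Bool) (r r' : Bool) :
    |f (Function.update σ j r) - f (Function.update σ j r')| ≤ D j := by
  cases r <;> cases r'
  · simpa using h.nonneg j
  · rw [abs_sub_comm]; exact h j σ
  · exact h j σ
  · simpa using h.nonneg j

lemma OscBound.abs_sub_le_sum (h : OscBound f D) (T : Finset ι) {σ τ : ι → Bool}
    (hστ : ∀ j ∉ T, σ j = τ j) : |f σ - f τ| ≤ ∑ j ∈ T, D j := by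
  induction T using Finset.induction generalizing σ with
  | empty => simp [funext fun j => hστ j (Finset.notMem_empty j)]
  | @insert j T hj ih =>
    have hfirst : |f σ - f (Function.update σ j (τ j))| ≤ D j := by
      simpa using h.abs_update_sub_le j σ (σ j) (τ j)
    have hrest : |f (Function.update σ j (τ j)) - f τ| ≤ ∑ k ∈ T, D k := by
      refine ih fun k hk => ?_
      by_cases hkj : k = j
      · subst hkj; simp
      · rw [Function.update_of_ne hkj]; exact hστ k (by simp [hkj, hk])
    rw [Finset.sum_insert hj]
    exact (abs_sub_le _ _ _).trans (add_le_add hfirst hrest)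

lemma oscBound_indicator_eq_true (u : ι) :
    OscBound ({σ : ι → Bool | σ u = true}.indicator 1) (Pi.single u 1) := by
  intro j σ
  by_cases hj : j = u
  · subst hj; simp
  · simp [Set.indicator_apply, Function.update_of_ne (Ne.symm hj), hj]

variable [Fintype ι]

def cylinder (T : Finset ι) (y : ι → Bool) : Finset (ι → Bool) :=
  univ.filter fun σ => ∀ j ∈ T, σ j = y j

lemma mem_cylinder {T : Finset ι} {y σ : ι → Bool} : σ ∈ cylinder T y ↔ ∀ j ∈ T, σ j = y j := by
  simp [cylinder]

/-- Flipping the spin at a site outside `T` is an involution of the cylinder. -/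
lemma sum_cylinder_update_add_update {T : Finset ι} {w : ι} (hw : w ∉ T) (y : ι → Bool)
    (g : (ι → Bool) → ℝ) :
    ∑ σ ∈ cylinder T y, (g (Function.update σ w true) + g (Function.update σ w false)) =
      2 * ∑ σ ∈ cylinder T y, g σ := by
  let flip (σ : ι → Bool) : ι → Bool := Function.update σ w (!σ w)
  have hflip (σ : ι → Bool) : flip (flip σ) = σ := by simp [flip]
  have hmem {σ : ι → Bool} (hσ : σ ∈ cylinder T y) : flip σ ∈ cylinder T y := by
    rw [mem_cylinder] at hσ ⊢
    intro j hj
    rw [show flip σ j = σ j from Function.update_of_ne (ne_of_mem_of_not_mem hj hw) _ _]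
    exact hσ j hj
  have hsum_flip : ∑ σ ∈ cylinder T y, g (flip σ) = ∑ σ ∈ cylinder T y, g σ :=
    Finset.sum_nbij' flip flip (fun _ => hmem) (fun _ => hmem) (fun σ _ => hflip σ)
      (fun σ _ => hflip σ) (fun _ _ => rfl)
  have hpair (σ : ι → Bool) :
      g (Function.update σ w true) + g (Function.update σ w false) = g σ + g (flip σ) := by
    cases hσw : σ w
    · rw [add_comm, ← hσw, Function.update_eq_self]; simp [flip, hσw]
    · rw [← hσw, Function.update_eq_self]; simp [flip, hσw]
  simp only [hpair, Finset.sum_add_distrib, hsum_flip]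
  ring

end Configurations

section Propagation

variable {ι : Type*} [Fintype ι] [DecidableEq ι] (M : Matrix ι ι ℝ) (m : ℝ)

/-- Oscillation bound, at the unconditioned sites, for `t` Glauber steps on `m` free sites applied
to the spin at `u` (see `oscBound_iterate_glauberStep`). -/
def freeOsc (u : ι) : ℕ → ι → ℝ
  | 0 => Pi.single u 1
  | t + 1 => fun j => (1 - m⁻¹) * freeOsc u t j + m⁻¹ * ∑ w, |M w j| * freeOsc u t w

/-- The oscillation that has leaked into the conditioned site `j` during the first `t` steps. -/
def fixedOsc (u : ι) (t : ℕ) (j : ι) : ℝ :=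
  m⁻¹ * ∑ s ∈ range t, ∑ w, |M w j| * freeOsc M m u s w

variable {M m}

lemma freeOsc_nonneg (hm : 1 ≤ m) (u : ι) (t : ℕ) (j : ι) : 0 ≤ freeOsc M m u t j := by
  induction t generalizing j with
  | zero => simp only [freeOsc, Pi.single_apply]; positivity
  | succ t ih =>
    have hlazy : 0 ≤ 1 - m⁻¹ := sub_nonneg.2 (inv_le_one_of_one_le₀ hm)
    exact add_nonneg (mul_nonneg hlazy (ih j)) <| mul_nonneg (by positivity) <|
      Finset.sum_nonneg fun w _ => mul_nonneg (abs_nonneg _) (ih w)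

lemma sum_freeOsc_le {ε : ℝ} (hm : 1 ≤ m) (hcol : ∀ j, ∑ w, |M w j| ≤ ε) (S : Finset ι)
    (t : ℕ) (j : ι) : ∑ u ∈ S, freeOsc M m u t j ≤ (1 - (1 - ε) / m) ^ t := by
  induction t generalizing j with
  | zero =>
    simp only [freeOsc, Finset.sum_pi_single j (fun _ => (1 : ℝ)) S]
    split_ifs <;> norm_num
  | succ t ih =>
    have hε : 0 ≤ ε := (Finset.sum_nonneg fun w _ => abs_nonneg (M w j)).trans (hcol j)
    have hκ : 0 ≤ (1 - (1 - ε) / m) ^ t := pow_nonneg (zero_le_one_sub_div hm hε) t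
    calc ∑ u ∈ S, freeOsc M m u (t + 1) j
        = (1 - m⁻¹) * ∑ u ∈ S, freeOsc M m u t j
          + m⁻¹ * ∑ w, |M w j| * ∑ u ∈ S, freeOsc M m u t w := by
          simp only [freeOsc, Finset.sum_add_distrib, Finset.mul_sum]
          rw [Finset.sum_comm (s := S)]
    _ ≤ (1 - m⁻¹) * (1 - (1 - ε) / m) ^ t + m⁻¹ * (ε * (1 - (1 - ε) / m) ^ t) := by
          gcongr
          · exact sub_nonneg.2 (inv_le_one_of_one_le₀ hm)
          · exact ih j
          · exact M.sum_abs_mul_le hcol ih hκ j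
    _ = (1 - (1 - ε) / m) ^ (t + 1) := by ring

lemma sum_fixedOsc_le {ε : ℝ} (hm : 1 ≤ m) (hcol : ∀ j, ∑ w, |M w j| ≤ ε) (hε : ε < 1)
    (S : Finset ι) (t : ℕ) (j : ι) : ∑ u ∈ S, fixedOsc M m u t j ≤ ε / (1 - ε) := by
  have hε₀ : 0 ≤ ε := (Finset.sum_nonneg fun w _ => abs_nonneg (M w j)).trans (hcol j)
  have hκ₀ := zero_le_one_sub_div hm hε₀
  have hκ₁ : 1 - (1 - ε) / m < 1 := sub_lt_self 1 (div_pos (by linarith) (by linarith))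
  calc ∑ u ∈ S, fixedOsc M m u t j
      = m⁻¹ * ∑ s ∈ range t, ∑ w, |M w j| * ∑ u ∈ S, freeOsc M m u s w := by
        simp only [fixedOsc, Finset.mul_sum]
        rw [Finset.sum_comm (s := S)]
        exact Finset.sum_congr rfl fun s _ => Finset.sum_comm
    _ ≤ m⁻¹ * ∑ s ∈ range t, ε * (1 - (1 - ε) / m) ^ s := by
        gcongr with s
        exact M.sum_abs_mul_le hcol (sum_freeOsc_le hm hcol S s) (pow_nonneg hκ₀ s) j
    _ ≤ m⁻¹ * (ε * (1 / (1 - (1 - (1 - ε) / m)))) := by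
        rw [← Finset.mul_sum]
        gcongr
        have := geom_sum_Ico_le_of_lt_one hκ₀ hκ₁ (m := 0) (n := t)
        rwa [← Finset.range_eq_Ico, pow_zero] at this
    _ = ε / (1 - ε) := by
        have : m ≠ 0 := by linarith
        field_simp
        rw [sub_sub_cancel]

lemma sum_freeOsc_add_fixedOsc_le {ε : ℝ} (hm : 1 ≤ m) (hcol : ∀ j, ∑ w, |M w j| ≤ ε)
    (hε : ε < 1) (S : Finset ι) (v : ι) (t : ℕ) :
    ∑ u ∈ S, (∑ j, freeOsc M m u t j + fixedOsc M m u t v)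
      ≤ ε / (1 - ε) + Fintype.card ι * (1 - (1 - ε) / m) ^ t := by
  rw [Finset.sum_add_distrib, Finset.sum_comm, add_comm]
  gcongr
  · exact sum_fixedOsc_le hm hcol hε S t v
  · refine (Finset.sum_le_sum fun j _ => sum_freeOsc_le hm hcol S t j).trans_eq ?_
    rw [Finset.sum_const, Finset.card_univ, nsmul_eq_mul]

end Propagation

section Dynamics

variable {n : ℕ} {M : Matrix (Fin n) (Fin n) ℝ} {θ : Fin n → ℝ}

lemma spin_true : spin true = 1 := rfl

lemma spin_false : spin false = -1 := rfl

variable (M θ) in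
lemma isingWt_pos (σ : Fin n → Bool) : 0 < isingWt M θ σ := exp_pos _

variable (M θ) in
def logOdds (w : Fin n) (σ : Fin n → Bool) : ℝ := 2 * θ w + 2 * ∑ j, M w j * spin (σ j)

lemma isingWt_update_true (hsymm : M.IsSymm) (hdiag : ∀ i, M i i = 0) (w : Fin n)
    (σ : Fin n → Bool) :
    isingWt M θ (Function.update σ w true) =
      exp (logOdds M θ w σ) * isingWt M θ (Function.update σ w false) := by
  have hspin (r : Bool) (i : Fin n) : spin (Function.update σ w r i) =
      Function.update (fun k => spin (σ k)) w (spin r) i :=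
    Function.apply_update (fun _ => spin) σ w r i
  have hlin : ∑ i, θ i * Function.update (fun k => spin (σ k)) w 1 i
      - ∑ i, θ i * Function.update (fun k => spin (σ k)) w (-1) i = 2 * θ w := by
    rw [← Finset.sum_sub_distrib, Finset.sum_eq_single w (fun i _ hi => by simp [hi]) (by simp)]
    simp only [Function.update_self]; ring
  have hquad := hsymm.quadForm_update_sub hdiag (fun k => spin (σ k)) w 1 (-1)
  simp only [isingWt, logOdds, ← exp_add, hspin, spin_true, spin_false]
  congr 1
  linarith

variable (M θ) in
def heatBathProb (w : Fin n) (σ : Fin n → Bool) : ℝ :=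
  isingWt M θ (Function.update σ w true) /
    (isingWt M θ (Function.update σ w true) + isingWt M θ (Function.update σ w false))

lemma heatBathProb_update_self (w : Fin n) (σ : Fin n → Bool) (r : Bool) :
    heatBathProb M θ w (Function.update σ w r) = heatBathProb M θ w σ := by
  simp only [heatBathProb, Function.update_idem]

lemma heatBathProb_eq_sigmoid (hsymm : M.IsSymm) (hdiag : ∀ i, M i i = 0) (w : Fin n)
    (σ : Fin n → Bool) : heatBathProb M θ w σ = sigmoid (logOdds M θ w σ) := by
  have hwt := isingWt_pos M θ (Function.update σ w false)
  rw [heatBathProb, isingWt_update_true hsymm hdiag, sigmoid_def, exp_neg]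
  field_simp

lemma logOdds_update_sub (w j : Fin n) (σ : Fin n → Bool) :
    logOdds M θ w (Function.update σ j true) - logOdds M θ w (Function.update σ j false) =
      4 * M w j := by
  have hterm (k : Fin n) : M w k * spin (Function.update σ j true k)
      - M w k * spin (Function.update σ j false k) = if k = j then 2 * M w j else 0 := by
    by_cases hk : k = j
    · subst hk; simp only [Function.update_self, spin, if_true]; norm_num; ring
    · simp [hk]
  have hsum : ∑ k, M w k * spin (Function.update σ j true k)
      - ∑ k, M w k * spin (Function.update σ j false k) = 2 * M w j := by
    rw [← Finset.sum_sub_distrib]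
    simp only [hterm, Finset.sum_ite_eq', Finset.mem_univ, if_true]
  simp only [logOdds]
  linarith

lemma oscBound_heatBathProb (hsymm : M.IsSymm) (hdiag : ∀ i, M i i = 0) (w : Fin n) :
    OscBound (heatBathProb M θ w) fun j => |M w j| := by
  intro j σ
  rw [heatBathProb_eq_sigmoid hsymm hdiag, heatBathProb_eq_sigmoid hsymm hdiag]
  refine (abs_sigmoid_sub_le _ _).trans_eq ?_
  rw [logOdds_update_sub, abs_mul, abs_of_pos four_pos]
  ring

lemma heatBathProb_mem_Icc (w : Fin n) (σ : Fin n → Bool) :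
    heatBathProb M θ w σ ∈ Set.Icc 0 1 := by
  have h₁ := isingWt_pos M θ (Function.update σ w true)
  have h₂ := isingWt_pos M θ (Function.update σ w false)
  exact ⟨by unfold heatBathProb; positivity, div_le_one_of_le₀ (by linarith) (by positivity)⟩

variable (M θ) in
def heatBath (w : Fin n) (f : (Fin n → Bool) → ℝ) (σ : Fin n → Bool) : ℝ :=
  heatBathProb M θ w σ * f (Function.update σ w true)
    + (1 - heatBathProb M θ w σ) * f (Function.update σ w false)

lemma heatBath_update_self (w : Fin n) (f : (Fin n → Bool) → ℝ) (σ : Fin n → Bool) (r : Bool) :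
    heatBath M θ w f (Function.update σ w r) = heatBath M θ w f σ := by
  simp only [heatBath, heatBathProb_update_self, Function.update_idem]

lemma oscBound_heatBath (hsymm : M.IsSymm) (hdiag : ∀ i, M i i = 0)
    {f : (Fin n → Bool) → ℝ} {D : Fin n → ℝ} (h : OscBound f D) (w : Fin n) :
    OscBound (heatBath M θ w f) fun j => (if j = w then 0 else D j) + |M w j| * D w := by
  intro j σ
  by_cases hj : j = w
  · subst hj
    simpa [heatBath_update_self] using mul_nonneg (abs_nonneg (M j j)) (h.nonneg j)
  have hcomm (r s : Bool) : Function.update (Function.update σ j r) w s =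
      Function.update (Function.update σ w s) j r := Function.update_comm hj r s σ
  obtain ⟨hp₀, hp₁⟩ := heatBathProb_mem_Icc (M := M) (θ := θ) w (Function.update σ j true)
  set p := heatBathProb M θ w (Function.update σ j true)
  set p' := heatBathProb M θ w (Function.update σ j false)
  have hjt := h j (Function.update σ w true)
  have hjf := h j (Function.update σ w false)
  have hw := h w (Function.update σ j false)
  have hp : |p - p'| ≤ |M w j| := oscBound_heatBathProb hsymm hdiag w j σ
  simp only [heatBath, hcomm, if_neg hj] at hw ⊢
  calc _ = |p * (f (Function.update (Function.update σ w true) j true)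
              - f (Function.update (Function.update σ w true) j false))
          + (1 - p) * (f (Function.update (Function.update σ w false) j true)
              - f (Function.update (Function.update σ w false) j false))
          + (p - p') * (f (Function.update (Function.update σ w true) j false)
              - f (Function.update (Function.update σ w false) j false))| := by
        congr 1; ring
    _ ≤ p * D j + (1 - p) * D j + |M w j| * D w := by
        refine (abs_add_three _ _ _).trans ?_
        rw [abs_mul, abs_mul, abs_mul, abs_of_nonneg hp₀, abs_of_nonneg (sub_nonneg.2 hp₁)]
        gcongr
    _ = D j + |M w j| * D w := by ring

variable (M θ) in
def glauberStep (U : Finset (Fin n)) (f : (Fin n → Bool) → ℝ) (σ : Fin n → Bool) : ℝ :=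
  (U.card : ℝ)⁻¹ * ∑ w ∈ U, heatBath M θ w f σ

lemma oscBound_glauberStep (hsymm : M.IsSymm) (hdiag : ∀ i, M i i = 0)
    {f : (Fin n → Bool) → ℝ} {D : Fin n → ℝ} (h : OscBound f D) (U : Finset (Fin n)) :
    OscBound (glauberStep M θ U f) fun j =>
      ((U.erase j).card / U.card : ℝ) * D j + (U.card : ℝ)⁻¹ * ∑ w ∈ U, |M w j| * D w := by
  intro j σ
  have hcount : ∑ w ∈ U, (if j = w then 0 else D j) = (U.erase j).card * D j := by
    simp [Finset.sum_ite, Finset.filter_ne]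
  calc _ = (U.card : ℝ)⁻¹ * |∑ w ∈ U, (heatBath M θ w f (Function.update σ j true)
        - heatBath M θ w f (Function.update σ j false))| := by
        rw [glauberStep, glauberStep, ← mul_sub, ← Finset.sum_sub_distrib, abs_mul,
          abs_of_nonneg (by positivity)]
    _ ≤ (U.card : ℝ)⁻¹ * ∑ w ∈ U, ((if j = w then 0 else D j) + |M w j| * D w) := by
        gcongr
        exact (Finset.abs_sum_le_sum_abs _ _).trans
          (Finset.sum_le_sum fun w _ => oscBound_heatBath hsymm hdiag h w j σ)
    _ = _ := by
        rw [Finset.sum_add_distrib, hcount]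
        ring

variable (M θ) in
def condExp (T : Finset (Fin n)) (y : Fin n → Bool) (f : (Fin n → Bool) → ℝ) : ℝ :=
  (cylinder T y).centerMass (isingWt M θ) f

lemma isingWt_add_isingWt_mul_heatBath (w : Fin n) (f : (Fin n → Bool) → ℝ) (σ : Fin n → Bool) :
    (isingWt M θ (Function.update σ w true) + isingWt M θ (Function.update σ w false)) *
        heatBath M θ w f σ =
      isingWt M θ (Function.update σ w true) * f (Function.update σ w true)
        + isingWt M θ (Function.update σ w false) * f (Function.update σ w false) := by
  have h₁ := isingWt_pos M θ (Function.update σ w true)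
  have h₂ := isingWt_pos M θ (Function.update σ w false)
  simp only [heatBath, heatBathProb]
  field_simp
  ring

lemma sum_cylinder_isingWt_mul_heatBath {T : Finset (Fin n)} {w : Fin n} (hw : w ∉ T)
    (y : Fin n → Bool) (f : (Fin n → Bool) → ℝ) :
    ∑ σ ∈ cylinder T y, isingWt M θ σ * heatBath M θ w f σ =
      ∑ σ ∈ cylinder T y, isingWt M θ σ * f σ := by
  have h := sum_cylinder_update_add_update hw y fun σ => isingWt M θ σ * heatBath M θ w f σ
  simp only [heatBath_update_self, ← add_mul, isingWt_add_isingWt_mul_heatBath,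
    sum_cylinder_update_add_update hw y fun σ => isingWt M θ σ * f σ] at h
  linarith

lemma condExp_glauberStep {T U : Finset (Fin n)} (hUT : Disjoint U T) (hU : U.Nonempty)
    (y : Fin n → Bool) (f : (Fin n → Bool) → ℝ) :
    condExp M θ T y (glauberStep M θ U f) = condExp M θ T y f := by
  have hcard : (U.card : ℝ) ≠ 0 := by exact_mod_cast hU.card_pos.ne'
  rw [condExp, condExp, Finset.centerMass, Finset.centerMass]
  congr 1
  calc ∑ σ ∈ cylinder T y, isingWt M θ σ • glauberStep M θ U f σ
      = (U.card : ℝ)⁻¹ * ∑ w ∈ U, ∑ σ ∈ cylinder T y, isingWt M θ σ * heatBath M θ w f σ := by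
        simp only [glauberStep, smul_eq_mul, Finset.mul_sum]
        rw [Finset.sum_comm]
        exact Finset.sum_congr rfl fun _ _ => Finset.sum_congr rfl fun _ _ => by ring
    _ = (U.card : ℝ)⁻¹ * ∑ _w ∈ U, ∑ σ ∈ cylinder T y, isingWt M θ σ * f σ := by
        congr 1
        exact Finset.sum_congr rfl fun w hw =>
          sum_cylinder_isingWt_mul_heatBath (Finset.disjoint_left.1 hUT hw) y f
    _ = ∑ σ ∈ cylinder T y, isingWt M θ σ • f σ := by
        rw [Finset.sum_const, nsmul_eq_mul, ← mul_assoc, inv_mul_cancel₀ hcard, one_mul]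
        rfl

lemma condExp_iterate_glauberStep {T U : Finset (Fin n)} (hUT : Disjoint U T) (hU : U.Nonempty)
    (y : Fin n → Bool) (f : (Fin n → Bool) → ℝ) (t : ℕ) :
    condExp M θ T y ((glauberStep M θ U)^[t] f) = condExp M θ T y f := by
  induction t with
  | zero => rfl
  | succ t ih => rw [Function.iterate_succ_apply', condExp_glauberStep hUT hU, ih]

lemma abs_condExp_update_sub_le (T : Finset (Fin n)) (v : Fin n) (y : Fin n → Bool)
    {f : (Fin n → Bool) → ℝ} {D : Fin n → ℝ} (h : OscBound f D) :
    |condExp M θ T (Function.update y v true) f - condExp M θ T (Function.update y v false) f|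
      ≤ ∑ j ∈ insert v Tᶜ, D j := by
  have hpos (b : Bool) : 0 < ∑ σ ∈ cylinder T (Function.update y v b), isingWt M θ σ :=
    Finset.sum_pos (fun σ _ => isingWt_pos M θ σ) ⟨_, mem_cylinder.2 fun _ _ => rfl⟩
  refine Finset.abs_centerMass_sub_le (fun σ => (isingWt_pos M θ σ).le) (hpos true) (hpos false)
    fun σ hσ τ hτ => h.abs_sub_le_sum _ fun j hj => ?_
  rw [Finset.mem_insert, Finset.mem_compl, not_or, not_not] at hj
  rw [mem_cylinder.1 hσ j hj.2, mem_cylinder.1 hτ j hj.2, Function.update_of_ne hj.1,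
    Function.update_of_ne hj.1]

lemma isingCond_eq_condExp (A B : (Fin n → Bool) → Prop) (T : Finset (Fin n)) (y : Fin n → Bool)
    (hB : ∀ σ, B σ ↔ ∀ j ∈ T, σ j = y j) :
    isingCond M θ A B = condExp M θ T y ({σ | A σ}.indicator 1) := by
  have hcyl : univ.filter B = cylinder T y := by ext σ; simp [cylinder, hB]
  have hZ : 0 < ∑ τ, isingWt M θ τ := Finset.sum_pos (fun τ _ => isingWt_pos M θ τ) univ_nonempty
  simp only [isingCond, isingPr, isingProb, ← Finset.sum_div, div_div_div_cancel_right₀ hZ.ne',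
    condExp, Finset.centerMass, smul_eq_mul, Set.indicator_apply, Set.mem_ofPred_eq, Pi.one_apply,
    mul_ite, mul_one, mul_zero, ← Finset.sum_filter, Finset.filter_filter, ← hcyl]
  rw [div_eq_inv_mul]
  congr 2
  ext σ
  simp [and_comm]

lemma oscBound_iterate_glauberStep (hsymm : M.IsSymm) (hdiag : ∀ i, M i i = 0)
    {U : Finset (Fin n)} {u : Fin n} (hu : u ∈ U) {m : ℝ} (hm : (U.card : ℝ) = m) (t : ℕ) :
    OscBound ((glauberStep M θ U)^[t] ({σ | σ u = true}.indicator 1))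
      fun j => if j ∈ U then freeOsc M m u t j else fixedOsc M m u t j := by
  have hm₁ : 1 ≤ m := hm ▸ by exact_mod_cast Finset.card_pos.2 ⟨u, hu⟩
  induction t with
  | zero =>
    refine (oscBound_indicator_eq_true u).mono fun j => ?_
    by_cases hj : j ∈ U
    · simp [hj, freeOsc]
    · simp [hj, fixedOsc, ne_of_mem_of_not_mem hu hj]
  | succ t ih =>
    rw [Function.iterate_succ_apply']
    refine (oscBound_glauberStep hsymm hdiag ih U).mono fun j => ?_
    have hspread : ∑ w ∈ U, |M w j| *
          (if w ∈ U then freeOsc M m u t w else fixedOsc M m u t w)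
        ≤ ∑ w, |M w j| * freeOsc M m u t w := by
      rw [Finset.sum_congr rfl fun w hw => by rw [if_pos hw]]
      exact Finset.sum_le_sum_of_subset_of_nonneg (Finset.subset_univ U) fun w _ _ =>
        mul_nonneg (abs_nonneg _) (freeOsc_nonneg hm₁ u t w)
    dsimp only
    by_cases hj : j ∈ U
    · rw [if_pos hj, if_pos hj, Finset.card_erase_of_mem hj,
        Nat.cast_sub (Finset.card_pos.2 ⟨j, hj⟩), hm, Nat.cast_one, sub_div, div_self (by linarith),
        one_div]
      simp only [freeOsc]
      gcongr
    · rw [if_neg hj, if_neg hj, Finset.erase_eq_of_notMem hj, hm, div_self (by linarith), one_mul,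
        fixedOsc, fixedOsc, Finset.sum_range_succ, mul_add]
      gcongr

lemma abs_isingCond_update_sub_le (hsymm : M.IsSymm) (hdiag : ∀ i, M i i = 0)
    {S : Finset (Fin n)} {u v : Fin n} (x : Fin n → Bool) (hu : u ∈ S) (huv : u ≠ v) (t : ℕ) :
    |isingCond M θ (fun σ => σ u = true)
        (fun σ => (∀ w ∈ S, w ≠ v → w ≠ u → σ w = x w) ∧ σ v = true) -
      isingCond M θ (fun σ => σ u = true)
        (fun σ => (∀ w ∈ S, w ≠ v → w ≠ u → σ w = x w) ∧ σ v = false)|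
      ≤ ∑ j, freeOsc M ((insert v S)ᶜ.card + 1) u t j
        + fixedOsc M ((insert v S)ᶜ.card + 1) u t v := by
  set T := (insert v S).erase u
  have hvT : v ∈ T := Finset.mem_erase.2 ⟨huv.symm, Finset.mem_insert_self v S⟩
  have huT : u ∈ Tᶜ := by simp [T]
  have hcard : (Tᶜ.card : ℝ) = (insert v S)ᶜ.card + 1 := by
    have h₁ := Finset.card_erase_of_mem (Finset.mem_insert_of_mem hu : u ∈ insert v S)
    have h₂ := Finset.card_le_univ (insert v S)
    have h₃ := Finset.card_pos.2 ⟨v, Finset.mem_insert_self v S⟩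
    rw [Finset.card_compl, Finset.card_compl, h₁]
    simp only [Fintype.card_fin] at h₂ ⊢
    norm_cast
    omega
  have hcond (r : Bool) (σ : Fin n → Bool) :
      ((∀ w ∈ S, w ≠ v → w ≠ u → σ w = x w) ∧ σ v = r) ↔
        ∀ j ∈ T, σ j = Function.update x v r j := by
    constructor
    · rintro ⟨hS, hv⟩ j hj
      obtain ⟨hju, hj⟩ := Finset.mem_erase.1 hj
      by_cases hjv : j = v
      · subst hjv; simpa using hv
      · rw [Function.update_of_ne hjv]
        exact hS j ((Finset.mem_insert.1 hj).resolve_left hjv) hjv hju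
    · intro h
      refine ⟨fun w hw hwv hwu => ?_, by simpa using h v hvT⟩
      simpa [Function.update_of_ne hwv] using
        h w (Finset.mem_erase.2 ⟨hwu, Finset.mem_insert_of_mem hw⟩)
  have hU : Disjoint Tᶜ T := disjoint_compl_left
  rw [isingCond_eq_condExp _ _ T _ (hcond true), isingCond_eq_condExp _ _ T _ (hcond false),
    ← condExp_iterate_glauberStep hU ⟨u, huT⟩ (Function.update x v true) _ t,
    ← condExp_iterate_glauberStep hU ⟨u, huT⟩ (Function.update x v false) _ t]
  refine (abs_condExp_update_sub_le T v x
    (oscBound_iterate_glauberStep hsymm hdiag huT hcard t)).trans ?_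
  have hvU : v ∉ Tᶜ := Finset.notMem_compl.2 hvT
  rw [Finset.sum_insert hvU, if_neg hvU, add_comm, Finset.sum_congr rfl fun j hj => if_pos hj]
  gcongr
  · exact fun j _ _ => freeOsc_nonneg (le_add_of_nonneg_left (Nat.cast_nonneg _)) u t j
  · exact Finset.subset_univ _

end Dynamics

end Ising

open Ising in
theorem stmt2_general {n : ℕ} (b : ℝ) (d : ℕ)
    (hbd : b * d < 1)
    (M : Matrix (Fin n) (Fin n) ℝ) (θ : Fin n → ℝ)
    (hsymm : M.IsSymm) (hdiag : ∀ i, M i i = 0)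
    (hbound : ∀ i j, |M i j| ≤ b)
    (hsparse : ∀ i, (Finset.univ.filter (fun j => M i j ≠ 0)).card ≤ d)
    (S : Finset (Fin n)) (v : Fin n) (x : Fin n → Bool) :
    ∑ u ∈ S.filter (fun u => u ≠ v),
        |isingCond M θ (fun σ => σ u = true)
            (fun σ => (∀ w ∈ S, w ≠ v → w ≠ u → σ w = x w) ∧ σ v = true) -
          isingCond M θ (fun σ => σ u = true)
            (fun σ => (∀ w ∈ S, w ≠ v → w ≠ u → σ w = x w) ∧ σ v = false)|
      ≤ b * d / (1 - b * d) := by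
  set m : ℝ := (insert v S)ᶜ.card + 1
  have hm : 1 ≤ m := by simp [m]
  have hcol (j : Fin n) : ∑ w, |M w j| ≤ b * d := by
    simpa only [hsymm.apply] using M.sum_abs_le_of_sparse hbound hsparse j
  have hε : 0 ≤ b * d := (Finset.sum_nonneg fun w _ => abs_nonneg (M w v)).trans (hcol v)
  refine le_of_forall_le_add_mul_pow (K := n) (zero_le_one_sub_div hm hε)
    (sub_lt_self 1 (div_pos (by linarith) (by linarith))) fun t => ?_
  calc _ ≤ ∑ u ∈ S.filter (· ≠ v), (∑ j, freeOsc M m u t j + fixedOsc M m u t v) :=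
        Finset.sum_le_sum fun u hu =>
          abs_isingCond_update_sub_le hsymm hdiag x (Finset.mem_filter.1 hu).1
            (Finset.mem_filter.1 hu).2 t
    _ ≤ _ := by simpa using sum_freeOsc_add_fixedOsc_le hm hcol hbd _ v t

/-- The total influence of a vertex `v` on the vertices of `S` (conditioned on
the remaining values in `S`) is at most `bd/(1-bd)` in the high-temperature regime. -/
theorem stmt2 {n : ℕ} (b : ℝ) (d : ℕ) (hb : 0 < b) (hd : 0 < d) (hn : 0 < n)
    (hbd : b * d < 1)
    (M : Matrix (Fin n) (Fin n) ℝ) (θ : Fin n → ℝ)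
    (hsymm : M.IsSymm) (hdiag : ∀ i, M i i = 0)
    (hbound : ∀ i j, |M i j| ≤ b)
    (hsparse : ∀ i, (Finset.univ.filter (fun j => M i j ≠ 0)).card ≤ d)
    (S : Finset (Fin n)) (v : Fin n) (x : Fin n → Bool) :
    ∑ u ∈ S.filter (fun u => u ≠ v),
        |isingCond M θ (fun σ => σ u = true)
            (fun σ => (∀ w ∈ S, w ≠ v → w ≠ u → σ w = x w) ∧ σ v = true) -
          isingCond M θ (fun σ => σ u = true)
            (fun σ => (∀ w ∈ S, w ≠ v → w ≠ u → σ w = x w) ∧ σ v = false)|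
      ≤ b * d / (1 - b * d) :=
  stmt2_general b d hbd M θ hsymm hdiag hbound hsparse S v x
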